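/- arXiv:1804.01430 — 3 statements merged into one kernel-verified Lean document; each statement's English description precedes it below -/
import Mathlib

section
/- Let p₀, p₁ ∈ [0, 1/2) and p ∈ [0, 1/2] be such that p * p₀ ≥ p₁ and p * p₁ ≥ p₀. Then the function ν ↦ ḡ(f̄⁻¹(ν)) is convex on the interval [H_b(p₀) + H_b(p₁), 2], where f̄⁻¹ denotes the inverse of the strictly increasing function f̄ : [0, 1/2] → [H_b(p₀) + H_b(p₁), 2]. -/
/-- Binary entropy function (base-2 logarithm), with `Hb 0 = Hb 1 = 0`. -/
noncomputable def Hb (x : ℝ) : ℝ := -(x * Real.logb 2 x) - (1 - x) * Real.logb 2 (1 - x)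

/-- The star operation `p * x = p(1−x) + (1−p)x`. -/
noncomputable def pstar (p x : ℝ) : ℝ := p * (1 - x) + (1 - p) * x

/-- `f̄(x̄) = H_b(p₀ * x̄) + H_b(p₁ * x̄)`. -/
noncomputable def fbar (p₀ p₁ x : ℝ) : ℝ := Hb (pstar p₀ x) + Hb (pstar p₁ x)

/-- `ḡ(x̄) = H_b(p * p₀ * x̄) + H_b(p * p₁ * x̄)`. -/
noncomputable def gbar (p p₀ p₁ x : ℝ) : ℝ :=
  Hb (pstar p (pstar p₀ x)) + Hb (pstar p (pstar p₁ x))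

/-!
Writing `ν = f̄ x`, Cauchy's mean value theorem turns the slopes of `ḡ ∘ f̄⁻¹` into values of
`ḡ' / f̄'`, so convexity amounts to `ḡ' / f̄'` being nondecreasing on `(0, 1/2)`. Since the star
operation is associative, `ḡ` is `f̄` with parameters `qᵢ = p * pᵢ`, and the hypotheses, together
with `pᵢ ≤ p * pᵢ`, give `pⱼ ≤ qᵢ` for all `i, j`. With `Λ t = log ((1 - t) / t)` (`negLogit`) we have
`log 2 · f̄' x = ∑ (1 - 2pᵢ) Λ (pᵢ * x)`, and the sign of the derivative of the ratio splits into
four cross terms, one for each pair `pⱼ ≤ qᵢ`. Each reduces to the monotonicity of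
`t (1 - t) Λ t / (1 - 2t)` on `(0, 1/2)`, which in turn follows from `Λ t ≥ 2 (1 - 2t)`.
-/

open Real Set

lemma monotoneOn_div_of_hasDerivAt {f g f' g' : ℝ → ℝ} {a b : ℝ}
    (hf : ∀ x ∈ Ioo a b, HasDerivAt f (f' x) x) (hg : ∀ x ∈ Ioo a b, HasDerivAt g (g' x) x)
    (hpos : ∀ x ∈ Ioo a b, 0 < f x) (hle : ∀ x ∈ Ioo a b, g x * f' x ≤ g' x * f x) :
    MonotoneOn (fun x => g x / f x) (Ioo a b) := by
  have hdiv : ∀ x ∈ Ioo a b,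
      HasDerivAt (fun x => g x / f x) ((g' x * f x - g x * f' x) / f x ^ 2) x :=
    fun x hx => (hg x hx).div (hf x hx) (hpos x hx).ne'
  refine monotoneOn_of_hasDerivWithinAt_nonneg (convex_Ioo a b)
    (fun x hx => (hdiv x hx).continuousAt.continuousWithinAt)
    (fun x hx => (hdiv x (by rwa [interior_Ioo] at hx)).hasDerivWithinAt) (fun x hx => ?_)
  rw [interior_Ioo] at hx
  exact div_nonneg (sub_nonneg.2 (hle x hx)) (sq_nonneg _)

lemma exists_div_eq_deriv_div {f g f' g' : ℝ → ℝ} {x y : ℝ} (hxy : x < y)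
    (hf : ContinuousOn f (Icc x y)) (hg : ContinuousOn g (Icc x y))
    (hf' : ∀ z ∈ Ioo x y, HasDerivAt f (f' z) z) (hg' : ∀ z ∈ Ioo x y, HasDerivAt g (g' z) z)
    (hpos : ∀ z ∈ Ioo x y, 0 < f' z) :
    ∃ ξ ∈ Ioo x y, (g y - g x) / (f y - f x) = g' ξ / f' ξ := by
  obtain ⟨ξ, hξ, h⟩ := exists_ratio_hasDerivAt_eq_ratio_slope f f' hxy hf hf' g g' hg hg'
  have hfxy : 0 < f y - f x := by
    obtain ⟨ζ, hζ, h⟩ := exists_hasDerivAt_eq_slope f f' hxy hf hf'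
    rw [eq_div_iff (sub_ne_zero.2 hxy.ne')] at h
    nlinarith [hpos ζ hζ]
  exact ⟨ξ, hξ, (div_eq_div_iff hfxy.ne' (hpos ξ hξ).ne').2 (h.trans (mul_comm _ _))⟩

theorem convexOn_comp_of_monotoneOn_deriv_div {f g f' g' finv : ℝ → ℝ} {a b : ℝ} (hab : a ≤ b)
    (hf : ContinuousOn f (Icc a b)) (hg : ContinuousOn g (Icc a b))
    (hf' : ∀ x ∈ Ioo a b, HasDerivAt f (f' x) x) (hg' : ∀ x ∈ Ioo a b, HasDerivAt g (g' x) x)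
    (hpos : ∀ x ∈ Ioo a b, 0 < f' x) (hmono : MonotoneOn (fun x => g' x / f' x) (Ioo a b))
    (hinv : ∀ x ∈ Icc a b, finv (f x) = x) :
    ConvexOn ℝ (Icc (f a) (f b)) (fun ν => g (finv ν)) := by
  have hfmono : StrictMonoOn f (Icc a b) :=
    strictMonoOn_of_hasDerivWithinAt_pos (convex_Icc a b) hf
      (fun x hx => (hf' x (by rwa [interior_Icc] at hx)).hasDerivWithinAt)
      (fun x hx => hpos x (by rwa [interior_Icc] at hx))
  have hsurj : Icc (f a) (f b) ⊆ f '' Icc a b := intermediate_value_Icc hab hf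
  have hslope : ∀ x ∈ Icc a b, ∀ y ∈ Icc a b, x < y →
      ∃ ξ ∈ Ioo x y, (g y - g x) / (f y - f x) = g' ξ / f' ξ := by
    intro x hx y hy hxy
    have hsub : Ioo x y ⊆ Ioo a b := Ioo_subset_Ioo hx.1 hy.2
    exact exists_div_eq_deriv_div hxy (hf.mono (Icc_subset_Icc hx.1 hy.2))
      (hg.mono (Icc_subset_Icc hx.1 hy.2)) (fun z hz => hf' z (hsub hz))
      (fun z hz => hg' z (hsub hz)) (fun z hz => hpos z (hsub hz))
  refine convexOn_of_slope_mono_adjacent (convex_Icc _ _) ?_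
  intro ν₁ ν₂ ν₃ hν₁ hν₃ h₁₂ h₂₃
  obtain ⟨x₁, hx₁, rfl⟩ := hsurj hν₁
  obtain ⟨x₂, hx₂, rfl⟩ := hsurj ⟨hν₁.1.trans h₁₂.le, h₂₃.le.trans hν₃.2⟩
  obtain ⟨x₃, hx₃, rfl⟩ := hsurj hν₃
  obtain ⟨ξ₁, hξ₁, e₁⟩ := hslope x₁ hx₁ x₂ hx₂ ((hfmono.lt_iff_lt hx₁ hx₂).1 h₁₂)
  obtain ⟨ξ₂, hξ₂, e₂⟩ := hslope x₂ hx₂ x₃ hx₃ ((hfmono.lt_iff_lt hx₂ hx₃).1 h₂₃)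
  rw [hinv x₁ hx₁, hinv x₂ hx₂, hinv x₃ hx₃, e₁, e₂]
  exact hmono ⟨hx₁.1.trans_lt hξ₁.1, hξ₁.2.trans_le hx₂.2⟩
    ⟨hx₂.1.trans_lt hξ₂.1, hξ₂.2.trans_le hx₃.2⟩ (hξ₁.2.trans hξ₂.1).le

lemma Hb_eq_binEntropy_div (x : ℝ) : Hb x = binEntropy x / log 2 := by
  simp only [Hb, binEntropy, logb, log_inv]; ring

lemma continuous_Hb : Continuous Hb := by
  simpa only [funext Hb_eq_binEntropy_div] using binEntropy_continuous.div_const (log 2)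

lemma Hb_half : Hb (1 / 2) = 1 := by
  rw [Hb_eq_binEntropy_div, one_div, binEntropy_two_inv, div_self (log_pos one_lt_two).ne']

noncomputable def negLogit (t : ℝ) : ℝ := log (1 - t) - log t

lemma hasDerivAt_Hb {t : ℝ} (h₀ : t ≠ 0) (h₁ : t ≠ 1) :
    HasDerivAt Hb (negLogit t / log 2) t := by
  rw [funext Hb_eq_binEntropy_div]
  exact (hasDerivAt_binEntropy h₀ h₁).div_const (log 2)

lemma hasDerivAt_negLogit {t : ℝ} (h₀ : 0 < t) (h₁ : t < 1) :
    HasDerivAt negLogit (-(t * (1 - t))⁻¹) t := by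
  have h : HasDerivAt (fun u => log (1 - u) - log u) (-1 / (1 - t) - t⁻¹) t :=
    (((hasDerivAt_id' t).const_sub 1).log (by linarith)).sub (hasDerivAt_log h₀.ne')
  refine h.congr_deriv ?_
  field_simp [sub_ne_zero.2 h₁.ne']
  ring

lemma negLogit_half : negLogit (1 / 2) = 0 := by norm_num [negLogit]

lemma negLogit_pos {t : ℝ} (h₀ : 0 < t) (h : t < 1 / 2) : 0 < negLogit t :=
  sub_pos.2 (log_lt_log h₀ (by linarith))

/-- The first term of the series `log ((1 + s) / (1 - s)) = 2 ∑ s ^ (2k+1) / (2k+1)`,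
at `s = 1 - 2t`. -/
lemma two_mul_one_sub_two_mul_le_negLogit {t : ℝ} (h₀ : 0 < t) (h : t ≤ 1 / 2) :
    2 * (1 - 2 * t) ≤ negLogit t := by
  have hs : |1 - 2 * t| < 1 := abs_lt.2 ⟨by linarith, by linarith⟩
  have hsum := hasSum_log_sub_log_of_abs_lt_one hs
  have hlog : log (1 + (1 - 2 * t)) - log (1 - (1 - 2 * t)) = negLogit t := by
    rw [show 1 + (1 - 2 * t) = 2 * (1 - t) by ring, show 1 - (1 - 2 * t) = 2 * t by ring,
      log_mul two_ne_zero (by linarith), log_mul two_ne_zero h₀.ne', negLogit]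
    ring
  rw [hlog] at hsum
  simpa using le_hasSum hsum 0 fun k _ => by
    have : 0 ≤ 1 - 2 * t := by linarith
    positivity

lemma hasDerivAt_mul_negLogit_div {t : ℝ} (h₀ : 0 < t) (h : t < 1 / 2) :
    HasDerivAt (fun u => u * (1 - u) * negLogit u / (1 - 2 * u))
      (((1 - 2 * t + 2 * t ^ 2) * negLogit t - (1 - 2 * t)) / (1 - 2 * t) ^ 2) t := by
  have hw : HasDerivAt (fun u => u * (1 - u)) (1 - 2 * t) t :=
    ((hasDerivAt_id' t).mul ((hasDerivAt_id' t).const_sub 1)).congr_deriv (by ring)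
  have hd : HasDerivAt (fun u => 1 - 2 * u) (-2) t :=
    (((hasDerivAt_id' t).const_mul 2).const_sub 1).congr_deriv (by ring)
  have hwΛ : HasDerivAt (fun u => u * (1 - u) * negLogit u) ((1 - 2 * t) * negLogit t - 1) t :=
    (hw.mul (hasDerivAt_negLogit h₀ (by linarith))).congr_deriv (by
      field_simp [show 1 - t ≠ 0 by linarith]; ring)
  refine (hwΛ.div hd (by linarith)).congr_deriv ?_
  field_simp [show 1 - 2 * t ≠ 0 by linarith]
  ring

lemma monotoneOn_mul_negLogit_div :
    MonotoneOn (fun t => t * (1 - t) * negLogit t / (1 - 2 * t)) (Ioo 0 (1 / 2)) := by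
  refine monotoneOn_of_hasDerivWithinAt_nonneg (convex_Ioo _ _)
    (f' := fun t => ((1 - 2 * t + 2 * t ^ 2) * negLogit t - (1 - 2 * t)) / (1 - 2 * t) ^ 2)
    (fun t ht => (hasDerivAt_mul_negLogit_div ht.1 ht.2).continuousAt.continuousWithinAt)
    (fun t ht => ?_) (fun t ht => ?_)
  all_goals rw [interior_Ioo] at ht
  · exact (hasDerivAt_mul_negLogit_div ht.1 ht.2).hasDerivWithinAt
  · have hΛ := two_mul_one_sub_two_mul_le_negLogit ht.1 ht.2.le
    have hs : 0 ≤ 1 - 2 * t := by linarith [ht.2]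
    refine div_nonneg ?_ (sq_nonneg _)
    nlinarith [mul_le_mul_of_nonneg_left hΛ (by nlinarith : 0 ≤ 1 - 2 * t + 2 * t ^ 2),
      mul_nonneg hs (pow_nonneg hs 2)]

lemma mul_negLogit_cross_le {a b : ℝ} (ha : 0 < a) (hab : a ≤ b) (hb : b ≤ 1 / 2) :
    (1 - 2 * b) * (a * (1 - a) * negLogit a) ≤ (1 - 2 * a) * (b * (1 - b) * negLogit b) := by
  rcases hb.lt_or_eq with hb | rfl
  · have hmono := monotoneOn_mul_negLogit_div ⟨ha, hab.trans_lt hb⟩ ⟨ha.trans_le hab, hb⟩ hab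
    rw [div_le_div_iff₀ (by linarith) (by linarith)] at hmono
    linarith
  · norm_num [negLogit_half]

lemma one_sub_two_mul_pstar (q x : ℝ) : 1 - 2 * pstar q x = (1 - 2 * q) * (1 - 2 * x) := by
  unfold pstar; ring

lemma pstar_pstar (p q x : ℝ) : pstar p (pstar q x) = pstar (pstar p q) x := by
  unfold pstar; ring

lemma pstar_le_pstar_left {q r x : ℝ} (hqr : q ≤ r) (hx : x ≤ 1 / 2) : pstar q x ≤ pstar r x := by
  unfold pstar; nlinarith

lemma self_le_pstar {q x : ℝ} (hq : 0 ≤ q) (hx : x ≤ 1 / 2) : x ≤ pstar q x := by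
  unfold pstar; nlinarith

lemma pstar_le_half {q x : ℝ} (hq : q ≤ 1 / 2) (hx : x ≤ 1 / 2) : pstar q x ≤ 1 / 2 := by
  unfold pstar; nlinarith

lemma pstar_lt_half {q x : ℝ} (hq : q < 1 / 2) (hx : x < 1 / 2) : pstar q x < 1 / 2 := by
  unfold pstar; nlinarith

lemma hasDerivAt_pstar (q x : ℝ) : HasDerivAt (pstar q) (1 - 2 * q) x := by
  unfold pstar
  exact (((hasDerivAt_id' x).const_sub 1).const_mul q |>.add
    ((hasDerivAt_id' x).const_mul (1 - q))).congr_deriv (by ring)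

lemma continuous_pstar (q : ℝ) : Continuous (pstar q) := by
  unfold pstar; fun_prop

/-- This is `mul_negLogit_cross_le` for `pstar q x ≤ pstar r x`, whose distances `1 - 2 ·` from
`1 / 2` are `(1 - 2q)(1 - 2x)` and `(1 - 2r)(1 - 2x)`. -/
lemma cross_term_le {q r x : ℝ} (hq : 0 ≤ q) (hqr : q ≤ r) (hr : r ≤ 1 / 2)
    (hx₀ : 0 < x) (hx : x < 1 / 2) :
    (1 - 2 * r) ^ 2 * (1 - 2 * q) * negLogit (pstar q x) / (pstar r x * (1 - pstar r x)) ≤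
      (1 - 2 * q) ^ 2 * (1 - 2 * r) * negLogit (pstar r x) / (pstar q x * (1 - pstar q x)) := by
  have ha : 0 < pstar q x := hx₀.trans_le (self_le_pstar hq hx.le)
  have hab : pstar q x ≤ pstar r x := pstar_le_pstar_left hqr hx.le
  have hb : pstar r x ≤ 1 / 2 := pstar_le_half hr hx.le
  have key := mul_negLogit_cross_le ha hab hb
  rw [one_sub_two_mul_pstar, one_sub_two_mul_pstar] at key
  set a := pstar q x
  set b := pstar r x
  have hu : 0 < 1 - 2 * x := by linarith
  have key' : (1 - 2 * r) * (a * (1 - a) * negLogit a) ≤ (1 - 2 * q) * (b * (1 - b) * negLogit b) :=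
    le_of_mul_le_mul_right (by linarith [key]) hu
  have hc : 0 ≤ (1 - 2 * q) * (1 - 2 * r) := mul_nonneg (by linarith) (by linarith)
  rw [div_le_div_iff₀ (by nlinarith) (by nlinarith)]
  linear_combination (1 - 2 * q) * (1 - 2 * r) * key'

lemma gbar_eq_fbar (p p₀ p₁ : ℝ) : gbar p p₀ p₁ = fbar (pstar p p₀) (pstar p p₁) := by
  ext x; simp only [gbar, fbar, pstar_pstar]

lemma continuous_fbar (q₀ q₁ : ℝ) : Continuous (fbar q₀ q₁) :=
  (continuous_Hb.comp (continuous_pstar q₀)).add (continuous_Hb.comp (continuous_pstar q₁))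

lemma fbar_zero (q₀ q₁ : ℝ) : fbar q₀ q₁ 0 = Hb q₀ + Hb q₁ := by
  simp [fbar, pstar]

lemma fbar_half (q₀ q₁ : ℝ) : fbar q₀ q₁ (1 / 2) = 2 := by
  have h (q : ℝ) : pstar q (1 / 2) = 1 / 2 := by unfold pstar; ring
  rw [fbar, h, h, Hb_half]; norm_num

lemma pstar_mem_Ioc {q x : ℝ} (hq : q ∈ Icc 0 (1 / 2)) (hx : x ∈ Ioo 0 (1 / 2)) :
    pstar q x ∈ Ioc 0 (1 / 2) :=
  ⟨hx.1.trans_le (self_le_pstar hq.1 hx.2.le), pstar_le_half hq.2 hx.2.le⟩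

noncomputable def fbarDeriv (q₀ q₁ x : ℝ) : ℝ :=
  (1 - 2 * q₀) * negLogit (pstar q₀ x) + (1 - 2 * q₁) * negLogit (pstar q₁ x)

noncomputable def fbarCurv (q₀ q₁ x : ℝ) : ℝ :=
  (1 - 2 * q₀) ^ 2 / (pstar q₀ x * (1 - pstar q₀ x)) +
    (1 - 2 * q₁) ^ 2 / (pstar q₁ x * (1 - pstar q₁ x))

lemma hasDerivAt_fbar {q₀ q₁ x : ℝ} (hq₀ : q₀ ∈ Icc 0 (1 / 2)) (hq₁ : q₁ ∈ Icc 0 (1 / 2))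
    (hx : x ∈ Ioo 0 (1 / 2)) : HasDerivAt (fbar q₀ q₁) (fbarDeriv q₀ q₁ x / log 2) x := by
  have h₀ := pstar_mem_Ioc hq₀ hx
  have h₁ := pstar_mem_Ioc hq₁ hx
  refine (((hasDerivAt_Hb h₀.1.ne' (by linarith [h₀.2])).comp x (hasDerivAt_pstar q₀ x)).add
    ((hasDerivAt_Hb h₁.1.ne' (by linarith [h₁.2])).comp x (hasDerivAt_pstar q₁ x))).congr_deriv ?_
  simp only [fbarDeriv]; ring

lemma hasDerivAt_fbarDeriv {q₀ q₁ x : ℝ} (hq₀ : q₀ ∈ Icc 0 (1 / 2))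
    (hq₁ : q₁ ∈ Icc 0 (1 / 2)) (hx : x ∈ Ioo 0 (1 / 2)) :
    HasDerivAt (fbarDeriv q₀ q₁) (-fbarCurv q₀ q₁ x) x := by
  have h₀ := pstar_mem_Ioc hq₀ hx
  have h₁ := pstar_mem_Ioc hq₁ hx
  refine ((((hasDerivAt_negLogit h₀.1 (by linarith [h₀.2])).comp x
    (hasDerivAt_pstar q₀ x)).const_mul (1 - 2 * q₀)).add
    (((hasDerivAt_negLogit h₁.1 (by linarith [h₁.2])).comp x
    (hasDerivAt_pstar q₁ x)).const_mul (1 - 2 * q₁))).congr_deriv ?_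
  simp only [fbarCurv]; ring

lemma fbarDeriv_pos {q₀ q₁ x : ℝ} (hq₀ : q₀ ∈ Ico 0 (1 / 2)) (hq₁ : q₁ ∈ Ico 0 (1 / 2))
    (hx : x ∈ Ioo 0 (1 / 2)) : 0 < fbarDeriv q₀ q₁ x := by
  have h₀ := pstar_mem_Ioc (Ico_subset_Icc_self hq₀) hx
  have h₁ := pstar_mem_Ioc (Ico_subset_Icc_self hq₁) hx
  have hΛ₀ := negLogit_pos h₀.1 (pstar_lt_half hq₀.2 hx.2)
  have hΛ₁ := negLogit_pos h₁.1 (pstar_lt_half hq₁.2 hx.2)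
  unfold fbarDeriv
  have : 0 < 1 - 2 * q₀ := by linarith [hq₀.2]
  have : 0 < 1 - 2 * q₁ := by linarith [hq₁.2]
  positivity

lemma fbarDeriv_mul_fbarCurv_le {p₀ p₁ q₀ q₁ x : ℝ} (hp₀ : 0 ≤ p₀) (hp₁ : 0 ≤ p₁)
    (hq₀ : q₀ ≤ 1 / 2) (hq₁ : q₁ ≤ 1 / 2) (h₀₀ : p₀ ≤ q₀) (h₀₁ : p₀ ≤ q₁) (h₁₀ : p₁ ≤ q₀)
    (h₁₁ : p₁ ≤ q₁) (hx : x ∈ Ioo 0 (1 / 2)) :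
    fbarDeriv p₀ p₁ x * fbarCurv q₀ q₁ x ≤ fbarDeriv q₀ q₁ x * fbarCurv p₀ p₁ x := by
  have t₀₀ := cross_term_le hp₀ h₀₀ hq₀ hx.1 hx.2
  have t₀₁ := cross_term_le hp₀ h₀₁ hq₁ hx.1 hx.2
  have t₁₀ := cross_term_le hp₁ h₁₀ hq₀ hx.1 hx.2
  have t₁₁ := cross_term_le hp₁ h₁₁ hq₁ hx.1 hx.2
  unfold fbarDeriv fbarCurv
  linear_combination t₀₀ + t₀₁ + t₁₀ + t₁₁

/-- If `p₀, p₁ ∈ [0, 1/2)`, `p ∈ [0, 1/2]`, `p * p₀ ≥ p₁`, and `p * p₁ ≥ p₀`, then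
`ν ↦ ḡ(f̄⁻¹(ν))` is convex on `[H_b(p₀) + H_b(p₁), 2]`, where `f̄⁻¹` is the inverse of the
strictly increasing function `f̄ : [0, 1/2] → [H_b(p₀) + H_b(p₁), 2]` (expressed here by
any left inverse `finv` of `f̄` on `[0, 1/2]`). -/
theorem stmt1 (p₀ p₁ p : ℝ) (h₀ : p₀ ∈ Set.Ico (0 : ℝ) (1 / 2))
    (h₁ : p₁ ∈ Set.Ico (0 : ℝ) (1 / 2)) (hp : p ∈ Set.Icc (0 : ℝ) (1 / 2))
    (ha : pstar p p₀ ≥ p₁) (hb : pstar p p₁ ≥ p₀)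
    (finv : ℝ → ℝ) (hinv : ∀ x ∈ Set.Icc (0 : ℝ) (1 / 2), finv (fbar p₀ p₁ x) = x) :
    ConvexOn ℝ (Set.Icc (Hb p₀ + Hb p₁) 2) (fun ν => gbar p p₀ p₁ (finv ν)) := by
  have hq₀ : pstar p p₀ ∈ Icc 0 (1 / 2) :=
    ⟨h₀.1.trans (self_le_pstar hp.1 h₀.2.le), pstar_le_half hp.2 h₀.2.le⟩
  have hq₁ : pstar p p₁ ∈ Icc 0 (1 / 2) :=
    ⟨h₁.1.trans (self_le_pstar hp.1 h₁.2.le), pstar_le_half hp.2 h₁.2.le⟩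
  have hp₀ := Ico_subset_Icc_self h₀
  have hp₁ := Ico_subset_Icc_self h₁
  have hlog : log 2 ≠ 0 := (log_pos one_lt_two).ne'
  have hratio : MonotoneOn (fun x => fbarDeriv (pstar p p₀) (pstar p p₁) x / log 2 /
      (fbarDeriv p₀ p₁ x / log 2)) (Ioo 0 (1 / 2)) := by
    simp only [div_div_div_cancel_right₀ hlog]
    exact monotoneOn_div_of_hasDerivAt (fun x hx => hasDerivAt_fbarDeriv hp₀ hp₁ hx)
      (fun x hx => hasDerivAt_fbarDeriv hq₀ hq₁ hx) (fun x hx => fbarDeriv_pos h₀ h₁ hx)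
      (fun x hx => by
        linarith [fbarDeriv_mul_fbarCurv_le h₀.1 h₁.1 hq₀.2 hq₁.2
          (self_le_pstar hp.1 h₀.2.le) hb ha (self_le_pstar hp.1 h₁.2.le) hx])
  have hconv := convexOn_comp_of_monotoneOn_deriv_div (by norm_num)
    (continuous_fbar p₀ p₁).continuousOn (continuous_fbar _ _).continuousOn
    (fun x hx => hasDerivAt_fbar hp₀ hp₁ hx) (fun x hx => hasDerivAt_fbar hq₀ hq₁ hx)
    (fun x hx => div_pos (fbarDeriv_pos h₀ h₁ hx) (log_pos one_lt_two)) hratio hinv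
  rwa [fbar_zero, fbar_half, ← gbar_eq_fbar] at hconv
end

section
/- Let p₀, p₁, p ∈ [0,1] and x̄ ∈ [0, 1/2]. Let U be a random variable on a finite set, let (A, X) be a {0,1}²-valued pair such that for every u with P(U = u) > 0: P(A=0, X=0 | U=u) = P(A=1, X=1 | U=u) = x̄/2 and P(A=0, X=1 | U=u) = P(A=1, X=0 | U=u) = (1−x̄)/2. Let Y be {0,1}-valued with, conditionally on (U, A, X) = (u, a, x), P(Y ≠ x | U=u, A=a, X=x) = p_a (so Y depends on (U,A,X) only through (A,X)), and let Z be {0,1}-valued with, conditionally on (U, A, X, Y), P(Z ≠ Y | U, A, X, Y) = p (so Z depends only on Y). Then H(Y | A, U) = (1/2)·f̄(x̄) and H(Z | A, U) = (1/2)·ḡ(x̄); in particular, such distributions achieve equality in the bound H(Z|A,U) ≥ (1/2)·ḡ(f̄⁻¹(2·H(Y|A,U))) whenever p₀, p₁ ∈ [0,1/2). -/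
open MeasureTheory

/-- `prob μ X x = P[X = x]`. -/
noncomputable def prob {Ω : Type*} [MeasurableSpace Ω] (μ : Measure Ω)
    {α : Type*} (X : Ω → α) (x : α) : ℝ :=
  (μ (X ⁻¹' {x})).toReal

/-- Shannon entropy (in bits) of a random variable with values in a finite set. -/
noncomputable def ent {Ω : Type*} [MeasurableSpace Ω] (μ : Measure Ω)
    {α : Type*} [Fintype α] (X : Ω → α) : ℝ :=
  ∑ x : α, -(prob μ X x * Real.logb 2 (prob μ X x))

/-- Conditional entropy `H(X | Y)` in bits. -/
noncomputable def condEnt {Ω : Type*} [MeasurableSpace Ω] (μ : Measure Ω)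
    {α β : Type*} [Fintype α] [Fintype β] (X : Ω → α) (Y : Ω → β) : ℝ :=
  ent μ (fun ω => (X ω, Y ω)) - ent μ Y

lemma Hb_one_sub (x : ℝ) : Hb (1 - x) = Hb x := by
  have h : (1:ℝ) - (1 - x) = x := by ring
  rw [Hb, Hb, h]; ring

lemma pstar_mem {p x : ℝ} (hp : p ∈ Set.Icc (0:ℝ) 1) (hx : x ∈ Set.Icc (0:ℝ) 1) :
    pstar p x ∈ Set.Icc (0:ℝ) 1 := by
  obtain ⟨h1, h2⟩ := hp; obtain ⟨h3, h4⟩ := hx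
  constructor <;> [skip; skip] <;> · unfold pstar; nlinarith

lemma prob_nonneg {Ω : Type*} [MeasurableSpace Ω] (μ : Measure Ω)
    {α : Type*} (X : Ω → α) (x : α) : 0 ≤ prob μ X x := ENNReal.toReal_nonneg

lemma prob_congr {Ω α β : Type*} [MeasurableSpace Ω] (μ : Measure Ω)
    (f : Ω → α) (g : Ω → β) (a : α) (b : β) (h : ∀ ω, f ω = a ↔ g ω = b) :
    prob μ f a = prob μ g b := by
  unfold prob
  have hs : f ⁻¹' {a} = g ⁻¹' {b} := by ext ω; simpa using h ω
  rw [hs]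

lemma prob_fst {Ω β : Type*} [MeasurableSpace Ω] (μ : Measure Ω) [IsFiniteMeasure μ]
    [MeasurableSpace β] [MeasurableSingletonClass β]
    (V : Ω → Bool) (T : Ω → β) (hV : Measurable V) (hT : Measurable T) (t : β) :
    prob μ T t = prob μ (fun ω => (V ω, T ω)) (false, t)
               + prob μ (fun ω => (V ω, T ω)) (true, t) := by
  have hd : Disjoint ((fun ω => (V ω, T ω)) ⁻¹' {(false, t)})
      ((fun ω => (V ω, T ω)) ⁻¹' {(true, t)}) := by
    rw [Set.disjoint_left]
    intro ω h1 h2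
    simp only [Set.mem_preimage, Set.mem_singleton_iff, Prod.ext_iff] at h1 h2
    rw [h1.1] at h2
    exact absurd h2.1 (by simp)
  have hm : MeasurableSet ((fun ω => (V ω, T ω)) ⁻¹' {(true, t)}) :=
    (hV.prodMk hT) (measurableSet_singleton _)
  have hu : T ⁻¹' {t} = (fun ω => (V ω, T ω)) ⁻¹' {(false, t)}
      ∪ (fun ω => (V ω, T ω)) ⁻¹' {(true, t)} := by
    ext ω
    simp only [Set.mem_preimage, Set.mem_singleton_iff, Set.mem_union, Prod.ext_iff]
    cases V ω <;> simp
  unfold prob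
  rw [hu, measure_union hd hm, ENNReal.toReal_add (measure_ne_top μ _) (measure_ne_top μ _)]

lemma sum_prob {Ω α : Type*} [MeasurableSpace Ω] (μ : Measure Ω) [IsProbabilityMeasure μ]
    [Fintype α] [MeasurableSpace α] [MeasurableSingletonClass α]
    (W : Ω → α) (hW : Measurable W) : ∑ x : α, prob μ W x = 1 := by
  unfold prob
  rw [← ENNReal.toReal_sum (fun x _ => measure_ne_top _ _)]
  have h : ∑ x : α, μ (W ⁻¹' {x}) = μ Set.univ := by
    rw [← measure_biUnion_finset ?_ (fun x _ => hW (measurableSet_singleton x))]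
    · congr 1; ext ω; simp
    · intro x _ y _ hxy
      simp only [Function.onFun]
      rw [Set.disjoint_left]
      intro ω hx hy
      simp only [Set.mem_preimage, Set.mem_singleton_iff] at hx hy
      exact hxy (hx ▸ hy ▸ rfl)
  rw [h]; simp

lemma hb_point (q r : ℝ) (hq0 : 0 ≤ q) (hq1 : q ≤ 1) (hr : 0 ≤ r) :
    -(q * r * Real.logb 2 (q * r)) + -((1 - q) * r * Real.logb 2 ((1 - q) * r))
      - -(r * Real.logb 2 r) = r * Hb q := by
  rcases eq_or_lt_of_le hr with h | h
  · simp [← h, Hb]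
  rcases eq_or_lt_of_le hq0 with h0 | h0
  · simp [← h0, Hb]
  rcases eq_or_lt_of_le hq1 with h1 | h1
  · subst h1; simp [Hb]
  · have l1 : Real.logb 2 (q * r) = Real.logb 2 q + Real.logb 2 r :=
      Real.logb_mul (ne_of_gt h0) (ne_of_gt h)
    have l2 : Real.logb 2 ((1 - q) * r) = Real.logb 2 (1 - q) + Real.logb 2 r :=
      Real.logb_mul (by linarith) (ne_of_gt h)
    rw [l1, l2, Hb]; ring

lemma condEnt_bool {Ω β : Type*} [MeasurableSpace Ω] (μ : Measure Ω) [Fintype β]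
    (V : Ω → Bool) (T : Ω → β) (q r : β → ℝ)
    (hq0 : ∀ t, 0 ≤ q t) (hq1 : ∀ t, q t ≤ 1) (hr : ∀ t, 0 ≤ r t)
    (h1 : ∀ t, prob μ (fun ω => (V ω, T ω)) (true, t) = q t * r t)
    (h0 : ∀ t, prob μ (fun ω => (V ω, T ω)) (false, t) = (1 - q t) * r t)
    (hT : ∀ t, prob μ T t = r t) :
    condEnt μ V T = ∑ t, r t * Hb (q t) := by
  unfold condEnt ent
  rw [Fintype.sum_prod_type, Fintype.sum_bool, ← Finset.sum_add_distrib,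
    ← Finset.sum_sub_distrib]
  apply Finset.sum_congr rfl
  intro t _
  rw [h1 t, h0 t, hT t]
  exact hb_point (q t) (r t) (hq0 t) (hq1 t) (hr t)

/-- With `P(A,X|U)` given by the symmetric `x̄`-distribution, `Y` a BSC(`p_a`) observation
of `X` depending only on `(A,X)`, and `Z` a BSC(`p`) observation of `Y` depending only on
`Y`, one has `H(Y|A,U) = (1/2)·f̄(x̄)` and `H(Z|A,U) = (1/2)·ḡ(x̄)`; in particular such
distributions achieve equality in `H(Z|A,U) ≥ (1/2)·ḡ(f̄⁻¹(2·H(Y|A,U)))` whenever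
`p₀, p₁ ∈ [0,1/2)`. (Bits `0`/`1` are encoded as `false`/`true`.) -/
theorem stmt8 {Ω 𝒰 : Type*} [MeasurableSpace Ω] (μ : Measure Ω) [IsProbabilityMeasure μ]
    [Fintype 𝒰] [MeasurableSpace 𝒰] [MeasurableSingletonClass 𝒰]
    (p₀ p₁ p xb : ℝ)
    (hp₀ : p₀ ∈ Set.Icc (0 : ℝ) 1) (hp₁ : p₁ ∈ Set.Icc (0 : ℝ) 1)
    (hp : p ∈ Set.Icc (0 : ℝ) 1) (hxb : xb ∈ Set.Icc (0 : ℝ) (1 / 2))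
    (U : Ω → 𝒰) (A X Y Z : Ω → Bool)
    (hU : Measurable U) (hA : Measurable A) (hX : Measurable X)
    (hY : Measurable Y) (hZ : Measurable Z)
    (hAX : ∀ (u : 𝒰) (a x : Bool),
      prob μ (fun ω => (A ω, X ω, U ω)) (a, x, u) =
        (if a = x then xb / 2 else (1 - xb) / 2) * prob μ U u)
    (hYc : ∀ (u : 𝒰) (a x y : Bool),
      prob μ (fun ω => (Y ω, U ω, A ω, X ω)) (y, u, a, x) =
        (if y = x then 1 - (if a then p₁ else p₀) else (if a then p₁ else p₀)) *
          prob μ (fun ω => (U ω, A ω, X ω)) (u, a, x))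
    (hZc : ∀ (u : 𝒰) (a x y z : Bool),
      prob μ (fun ω => (Z ω, U ω, A ω, X ω, Y ω)) (z, u, a, x, y) =
        (if z = y then 1 - p else p) *
          prob μ (fun ω => (U ω, A ω, X ω, Y ω)) (u, a, x, y)) :
    condEnt μ Y (fun ω => (A ω, U ω)) = (1 / 2) * fbar p₀ p₁ xb ∧
    condEnt μ Z (fun ω => (A ω, U ω)) = (1 / 2) * gbar p p₀ p₁ xb ∧
    (∀ finv : ℝ → ℝ, (∀ t ∈ Set.Icc (0 : ℝ) (1 / 2), finv (fbar p₀ p₁ t) = t) →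
      p₀ < 1 / 2 → p₁ < 1 / 2 →
      condEnt μ Z (fun ω => (A ω, U ω)) =
        (1 / 2) * gbar p p₀ p₁ (finv (2 * condEnt μ Y (fun ω => (A ω, U ω))))) := by
  classical
  have hxb01 : xb ∈ Set.Icc (0:ℝ) 1 := ⟨hxb.1, by linarith [hxb.2]⟩
  have hs0 : pstar p₀ xb ∈ Set.Icc (0:ℝ) 1 := pstar_mem hp₀ hxb01
  have hs1 : pstar p₁ xb ∈ Set.Icc (0:ℝ) 1 := pstar_mem hp₁ hxb01
  have ht0 : pstar p (pstar p₀ xb) ∈ Set.Icc (0:ℝ) 1 := pstar_mem hp hs0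
  have ht1 : pstar p (pstar p₁ xb) ∈ Set.Icc (0:ℝ) 1 := pstar_mem hp hs1
  have hsum : ∑ u : 𝒰, prob μ U u = 1 := sum_prob μ U hU
  -- full joint distributions
  have hUAX : ∀ (u : 𝒰) (a x : Bool),
      prob μ (fun ω => (U ω, A ω, X ω)) (u, a, x) =
        (if a = x then xb / 2 else (1 - xb) / 2) * prob μ U u := by
    intro u a x
    rw [prob_congr μ (fun ω => (U ω, A ω, X ω)) (fun ω => (A ω, X ω, U ω)) (u,a,x) (a,x,u)
      (fun ω => by simp [Prod.ext_iff]; tauto)]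
    exact hAX u a x
  have hYfull : ∀ (u : 𝒰) (a x y : Bool),
      prob μ (fun ω => (Y ω, U ω, A ω, X ω)) (y, u, a, x) =
        (if y = x then 1 - (if a then p₁ else p₀) else (if a then p₁ else p₀)) *
          ((if a = x then xb / 2 else (1 - xb) / 2) * prob μ U u) := by
    intro u a x y
    rw [hYc u a x y, hUAX u a x]
  have hZfull : ∀ (u : 𝒰) (a x y z : Bool),
      prob μ (fun ω => (Z ω, U ω, A ω, X ω, Y ω)) (z, u, a, x, y) =
        (if z = y then 1 - p else p) *
          ((if y = x then 1 - (if a then p₁ else p₀) else (if a then p₁ else p₀)) *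
            ((if a = x then xb / 2 else (1 - xb) / 2) * prob μ U u)) := by
    intro u a x y z
    rw [hZc u a x y z,
      prob_congr μ (fun ω => (U ω, A ω, X ω, Y ω)) (fun ω => (Y ω, U ω, A ω, X ω))
        (u,a,x,y) (y,u,a,x) (fun ω => by simp [Prod.ext_iff]; tauto),
      hYfull u a x y]
  -- the conditioning variable
  set T : Ω → Bool × 𝒰 := fun ω => (A ω, U ω) with hT
  have hTm : Measurable T := hA.prodMk hU
  -- marginal of T
  have hAU : ∀ t : Bool × 𝒰, prob μ T t = (1/2) * prob μ U t.2 := by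
    rintro ⟨a, u⟩
    rw [prob_fst μ X T hX hTm (a,u)]
    have e : ∀ x : Bool, prob μ (fun ω => (X ω, T ω)) (x, (a,u)) =
        prob μ (fun ω => (A ω, X ω, U ω)) (a, x, u) := by
      intro x
      exact prob_congr μ _ _ _ _ (fun ω => by simp [hT, Prod.ext_iff]; tauto)
    rw [e false, e true, hAX, hAX]
    cases a <;> simp <;> ring
  -- joint of (Y, T)
  have hYAU : ∀ (y : Bool) (t : Bool × 𝒰), prob μ (fun ω => (Y ω, T ω)) (y, t) =
      (if t.1 then (if y then pstar p₁ xb else 1 - pstar p₁ xb)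
        else (if y then 1 - pstar p₀ xb else pstar p₀ xb)) * ((1/2) * prob μ U t.2) := by
    rintro y ⟨a, u⟩
    rw [prob_fst μ X (fun ω => (Y ω, T ω)) hX (hY.prodMk hTm) (y, (a,u))]
    have e : ∀ x : Bool, prob μ (fun ω => (X ω, Y ω, T ω)) (x, y, (a,u)) =
        prob μ (fun ω => (Y ω, U ω, A ω, X ω)) (y, u, a, x) := by
      intro x
      exact prob_congr μ _ _ _ _ (fun ω => by simp [hT, Prod.ext_iff]; tauto)
    rw [e false, e true, hYfull, hYfull]
    cases y <;> cases a <;> simp [pstar] <;> ring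
  -- joint of (Z, T)
  have hZAU : ∀ (z : Bool) (t : Bool × 𝒰), prob μ (fun ω => (Z ω, T ω)) (z, t) =
      (if t.1 then (if z then pstar p (pstar p₁ xb) else 1 - pstar p (pstar p₁ xb))
        else (if z then 1 - pstar p (pstar p₀ xb) else pstar p (pstar p₀ xb))) *
        ((1/2) * prob μ U t.2) := by
    rintro z ⟨a, u⟩
    rw [prob_fst μ Y (fun ω => (Z ω, T ω)) hY (hZ.prodMk hTm) (z, (a,u))]
    have e2 : ∀ (y : Bool), prob μ (fun ω => (Y ω, Z ω, T ω)) (y, z, (a,u)) =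
        prob μ (fun ω => (X ω, Y ω, Z ω, T ω)) (false, y, z, (a,u))
        + prob μ (fun ω => (X ω, Y ω, Z ω, T ω)) (true, y, z, (a,u)) :=
      fun y => prob_fst μ X (fun ω => (Y ω, Z ω, T ω)) hX
        (hY.prodMk ((hZ.prodMk hTm))) (y, z, (a,u))
    have e : ∀ x y : Bool, prob μ (fun ω => (X ω, Y ω, Z ω, T ω)) (x, y, z, (a,u)) =
        prob μ (fun ω => (Z ω, U ω, A ω, X ω, Y ω)) (z, u, a, x, y) := by
      intro x y
      exact prob_congr μ _ _ _ _ (fun ω => by simp [hT, Prod.ext_iff]; tauto)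
    rw [e2 false, e2 true, e, e, e, e, hZfull, hZfull, hZfull, hZfull]
    cases z <;> cases a <;> simp [pstar] <;> ring
  -- constant-sum helper
  have hconst : ∀ c : ℝ, ∑ u : 𝒰, (1/2) * prob μ U u * c = (1/2) * c := by
    intro c
    calc ∑ u : 𝒰, (1/2) * prob μ U u * c
        = (∑ u : 𝒰, prob μ U u) * ((1/2) * c) := by
          rw [Finset.sum_mul]; exact Finset.sum_congr rfl (fun u _ => by ring)
      _ = (1/2) * c := by rw [hsum]; ring
  have HY : condEnt μ Y T = (1 / 2) * fbar p₀ p₁ xb := by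
    rw [condEnt_bool μ Y T
      (fun t => if t.1 then pstar p₁ xb else 1 - pstar p₀ xb)
      (fun t => (1/2) * prob μ U t.2)
      (by rintro ⟨a,u⟩; cases a <;> simp <;> [linarith [hs0.2]; exact hs1.1])
      (by rintro ⟨a,u⟩; cases a <;> simp <;> [linarith [hs0.1]; exact hs1.2])
      (by rintro ⟨a,u⟩; have := prob_nonneg μ U u; simp; linarith)
      (by rintro ⟨a,u⟩; have := hYAU true (a,u); cases a <;> simpa using this)
      (by rintro ⟨a,u⟩
          have := hYAU false (a,u)
          cases a <;> simp at this ⊢ <;> rw [this] <;> ring)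
      (fun t => hAU t)]
    rw [Fintype.sum_prod_type, Fintype.sum_bool]
    simp only [Bool.false_eq_true, if_true, if_false]
    rw [hconst, hconst, Hb_one_sub, fbar]
    ring
  have HZ : condEnt μ Z T = (1 / 2) * gbar p p₀ p₁ xb := by
    rw [condEnt_bool μ Z T
      (fun t => if t.1 then pstar p (pstar p₁ xb) else 1 - pstar p (pstar p₀ xb))
      (fun t => (1/2) * prob μ U t.2)
      (by rintro ⟨a,u⟩; cases a <;> simp <;> [linarith [ht0.2]; exact ht1.1])
      (by rintro ⟨a,u⟩; cases a <;> simp <;> [linarith [ht0.1]; exact ht1.2])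
      (by rintro ⟨a,u⟩; have := prob_nonneg μ U u; simp; linarith)
      (by rintro ⟨a,u⟩; have := hZAU true (a,u); cases a <;> simpa using this)
      (by rintro ⟨a,u⟩
          have := hZAU false (a,u)
          cases a <;> simp at this ⊢ <;> rw [this] <;> ring)
      (fun t => hAU t)]
    rw [Fintype.sum_prod_type, Fintype.sum_bool]
    simp only [Bool.false_eq_true, if_true, if_false]
    rw [hconst, hconst, Hb_one_sub, gbar]
    ring
  refine ⟨HY, HZ, fun finv hfinv h0 h1 => ?_⟩
  rw [HY, HZ]
  have e : finv (2 * ((1/2) * fbar p₀ p₁ xb)) = xb := by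
    rw [show 2 * ((1/2) * fbar p₀ p₁ xb) = fbar p₀ p₁ xb by ring]
    exact hfinv xb hxb
  rw [e]
end

section
/- Let 𝒳, 𝒜, 𝒴, 𝒵, 𝒲, 𝒦 be finite sets. Let X^n = (X₁, …, X_n) be i.i.d. with distribution P_X on 𝒳, let (W, K) = f(X^n) for a deterministic function f : 𝒳^n → 𝒲 × 𝒦, let A^n = f_a(W) for a deterministic function f_a : 𝒲 → 𝒜^n, and suppose that conditionally on (X^n, A^n) = (x^n, a^n) the pairs (Y_i, Z_i), i = 1, …, n, are independent with (Y_i, Z_i) distributed according to a fixed channel P_{YZ|XA}(·,· | x_i, a_i). Then for every i ∈ {1, …, n}, the pair (Y_i, Z_i) is conditionally independent of (W, K, A^{n∖i}, X^{n∖i}, Y_{i+1}^{n}, Z^{i−1}) given (A_i, X_i). In particular, setting U_i = (W, A^{n∖i}, Y_{i+1}^{n}, Z^{i−1}) and V_i = (W, K, A^{n∖i}, Y_{i+1}^{n}, Z^{i−1}), the Markov chain U_i − V_i − (A_i, X_i) − (Y_i, Z_i) holds. -/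
open MeasureTheory

/-- Mutual information `I(X; Y)` in bits. -/
noncomputable def mutInf {Ω : Type*} [MeasurableSpace Ω] (μ : Measure Ω)
    {α β : Type*} [Fintype α] [Fintype β] (X : Ω → α) (Y : Ω → β) : ℝ :=
  ent μ X + ent μ Y - ent μ (fun ω => (X ω, Y ω))

/-- Conditional mutual information `I(X; Y | Z)` in bits. -/
noncomputable def condMutInf {Ω : Type*} [MeasurableSpace Ω] (μ : Measure Ω)
    {α β γ : Type*} [Fintype α] [Fintype β] [Fintype γ]
    (X : Ω → α) (Y : Ω → β) (Z : Ω → γ) : ℝ :=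
  condEnt μ X Z - condEnt μ X (fun ω => (Y ω, Z ω))

/-- `X` and `Y` are conditionally independent given `Z`:
`P[X=x, Y=y, Z=z] · P[Z=z] = P[X=x, Z=z] · P[Y=y, Z=z]` for all values. -/
def CondIndepRV {Ω : Type*} [MeasurableSpace Ω] (μ : Measure Ω)
    {α β γ : Type*} (X : Ω → α) (Y : Ω → β) (Z : Ω → γ) : Prop :=
  ∀ (x : α) (y : β) (z : γ),
    prob μ (fun ω => ((X ω, Y ω), Z ω)) ((x, y), z) * prob μ Z z =
      prob μ (fun ω => (X ω, Z ω)) (x, z) * prob μ (fun ω => (Y ω, Z ω)) (y, z)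

/-- The prefix `Z^{i−1}` of a string-valued random variable, encoded with values in
`Fin n → Option α` (positions `≥ i` are `none`). -/
def strPrefix {Ω α : Type*} {n : ℕ} (Z : Ω → Fin n → α) (i : Fin n) :
    Ω → Fin n → Option α :=
  fun ω j => if (j : ℕ) < (i : ℕ) then some (Z ω j) else none

/-- The suffix `Y_{i+1}^{n}` of a string-valued random variable, encoded with values in
`Fin n → Option α` (positions `≤ i` are `none`). -/
def strSuffix {Ω α : Type*} {n : ℕ} (Y : Ω → Fin n → α) (i : Fin n) :
    Ω → Fin n → Option α :=
  fun ω j => if (i : ℕ) < (j : ℕ) then some (Y ω j) else none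

/-- The string `X^{n∖i}` with the `i`-th coordinate removed, encoded with values in
`Fin n → Option α` (position `i` is `none`). -/
def strOmit {Ω α : Type*} {n : ℕ} (X : Ω → Fin n → α) (i : Fin n) :
    Ω → Fin n → Option α :=
  fun ω j => if j = i then none else some (X ω j)

/-!
Given the whole input string `X^n`, the channel acts on each letter separately, so the joint law
of `(X^n, (Y,Z)^{n∖i}, (Y_i, Z_i))` factors as `w(X^n, (Y,Z)^{n∖i}) · Q((Y_i, Z_i) | X_i, A_i)`,
where `A_i` is itself a function of `X^n`. A joint law of the form `α(r, c) β(v, c)` makes `R` and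
`V` conditionally independent given `C`; here `R = (Y_i, Z_i)`, `C = (A_i, X_i)`, and every `V`
in the statement is a function of `(X^n, (Y,Z)^{n∖i})`. The link `U_i − V_i − (A_i, X_i, Y_i, Z_i)`
holds because `U_i` is a function of `V_i`.
-/

open Finset Function

section

variable {Ω : Type*} [MeasurableSpace Ω] {μ : Measure Ω}

lemma prob_comp_of_injective {α β : Type*} {e : α → β} (he : Injective e) (X : Ω → α) (a : α) :
    prob μ (fun ω => e (X ω)) (e a) = prob μ X a := by
  unfold prob
  congr 3
  ext ω
  simp [he.eq_iff]

lemma prob_comp_eq_zero_of_notMem_range {α β : Type*} {e : α → β} (X : Ω → α) {b : β}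
    (hb : b ∉ Set.range e) : prob μ (fun ω => e (X ω)) b = 0 := by
  have hempty : (fun ω => e (X ω)) ⁻¹' {b} = ∅ :=
    Set.eq_empty_of_forall_notMem fun ω hω => hb ⟨X ω, hω⟩
  simp [prob, hempty]

lemma CondIndepRV.symm {α β γ : Type*} {X : Ω → α} {Y : Ω → β} {Z : Ω → γ}
    (h : CondIndepRV μ X Y Z) : CondIndepRV μ Y X Z := by
  intro y x z
  have hswap := prob_comp_of_injective (μ := μ) (e := fun p : (α × β) × γ => ((p.1.2, p.1.1), p.2))
    (fun p q hpq => by simp_all [Prod.ext_iff]) (fun ω => ((X ω, Y ω), Z ω)) ((x, y), z)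
  simp only at hswap
  rw [hswap, h x y z, mul_comm]

lemma measurableSet_preimage_of_measurableSet_fiber {σ : Type*} [Countable σ] {S : Ω → σ}
    (hS : ∀ s, MeasurableSet (S ⁻¹' {s})) (A : Set σ) : MeasurableSet (S ⁻¹' A) := by
  rw [← Set.biUnion_preimage_singleton]
  exact .biUnion A.to_countable fun s _ => hS s

lemma prob_comp_eq_sum [IsFiniteMeasure μ] {σ τ : Type*} [Fintype σ] [DecidableEq τ] {S : Ω → σ}
    (hS : ∀ s, MeasurableSet (S ⁻¹' {s})) (G : σ → τ) (t : τ) :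
    prob μ (fun ω => G (S ω)) t = ∑ s, if G s = t then prob μ S s else 0 := by
  have hunion : (fun ω => G (S ω)) ⁻¹' {t} = ⋃ s ∈ univ.filter (G · = t), S ⁻¹' {s} := by
    ext ω; simp
  rw [prob, hunion, measure_biUnion_finset (fun s _ s' _ hss' => ?_) fun s _ => hS s,
    ENNReal.toReal_sum fun s _ => measure_ne_top μ _, sum_filter]
  · rfl
  · exact Set.disjoint_left.2 fun ω h h' => hss' (h.symm.trans h')

lemma condIndepRV_of_eq_comp {α β γ : Type*} {X : Ω → α} {Y : Ω → β} {Z : Ω → γ} (g : γ → α)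
    (hX : ∀ ω, X ω = g (Z ω)) : CondIndepRV μ X Y Z := by
  obtain rfl : X = fun ω => g (Z ω) := funext hX
  intro x y z
  by_cases hx : g z = x
  · subst hx
    have hXYZ := prob_comp_of_injective (μ := μ) (e := fun p : β × γ => ((g p.2, p.1), p.2))
      (fun p q hpq => by simp_all [Prod.ext_iff]) (fun ω => (Y ω, Z ω)) (y, z)
    have hXZ := prob_comp_of_injective (μ := μ) (e := fun c : γ => (g c, c))
      (fun p q hpq => by simp_all [Prod.ext_iff]) Z z
    simp only at hXYZ hXZ
    rw [hXYZ, hXZ, mul_comm]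
  · have hXYZ := prob_comp_eq_zero_of_notMem_range (μ := μ)
      (e := fun p : β × γ => ((g p.2, p.1), p.2)) (fun ω => (Y ω, Z ω)) (b := ((x, y), z))
      (by rintro ⟨p, hp⟩; simp only [Prod.mk.injEq] at hp; exact hx (hp.2 ▸ hp.1.1))
    have hXZ := prob_comp_eq_zero_of_notMem_range (μ := μ) (e := fun c : γ => (g c, c)) Z
      (b := (x, z))
      (by rintro ⟨p, hp⟩; simp only [Prod.mk.injEq] at hp; exact hx (hp.2 ▸ hp.1))
    simp only at hXYZ hXZ
    rw [hXYZ, hXZ, zero_mul, zero_mul]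

lemma condIndepRV_of_prob_eq_mul [IsFiniteMeasure μ] {α β γ : Type*} [Fintype α] [Fintype β]
    [Fintype γ] {X : Ω → α} {Y : Ω → β} {Z : Ω → γ}
    (hmeas : ∀ t, MeasurableSet ((fun ω => ((X ω, Y ω), Z ω)) ⁻¹' {t}))
    (φ : α → γ → ℝ) (ψ : β → γ → ℝ)
    (h : ∀ x y z, prob μ (fun ω => ((X ω, Y ω), Z ω)) ((x, y), z) = φ x z * ψ y z) :
    CondIndepRV μ X Y Z := by
  classical
  intro x y z
  have hXZ : prob μ (fun ω => (X ω, Z ω)) (x, z) = φ x z * ∑ y', ψ y' z := by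
    rw [prob_comp_eq_sum hmeas (fun p => (p.1.1, p.2))]
    simp [Fintype.sum_prod_type, h, mul_sum, ite_and]
  have hYZ : prob μ (fun ω => (Y ω, Z ω)) (y, z) = (∑ x', φ x' z) * ψ y z := by
    rw [prob_comp_eq_sum hmeas (fun p => (p.1.2, p.2))]
    simp [Fintype.sum_prod_type, h, sum_mul, ite_and]
  have hZ : prob μ Z z = (∑ x', φ x' z) * ∑ y', ψ y' z := by
    rw [prob_comp_eq_sum hmeas (fun p => p.2)]
    simp [Fintype.sum_prod_type, h, sum_mul_sum]
  rw [h, hXZ, hYZ, hZ]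
  ring

lemma condIndepRV_comp_of_prob_eq_mul [IsFiniteMeasure μ] {α ρ ν γ : Type*} [Fintype α]
    [Fintype ρ] [Fintype ν] [Fintype γ] {M : Ω → α} {R : Ω → ρ}
    (hmeas : ∀ t, MeasurableSet ((fun ω => (M ω, R ω)) ⁻¹' {t}))
    (w : α → ℝ) (c : α → γ) (g : γ → ρ → ℝ)
    (hpmf : ∀ m r, prob μ (fun ω => (M ω, R ω)) (m, r) = w m * g (c m) r) (v : α → ν) :
    CondIndepRV μ R (fun ω => v (M ω)) (fun ω => c (M ω)) := by
  classical
  refine condIndepRV_of_prob_eq_mul (fun t => measurableSet_preimage_of_measurableSet_fiber hmeas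
    ((fun p : α × ρ => ((p.2, v p.1), c p.1)) ⁻¹' {t})) (fun r c₀ => g c₀ r)
    (fun v₀ c₀ => ∑ m, if v m = v₀ ∧ c m = c₀ then w m else 0) fun r₀ v₀ c₀ => ?_
  rw [prob_comp_eq_sum hmeas (fun p => ((p.2, v p.1), c p.1)), Fintype.sum_prod_type,
    mul_sum]
  refine sum_congr rfl fun m _ => ?_
  by_cases hm : v m = v₀ ∧ c m = c₀
  · simp [hpmf, hm, mul_comm]
  · simp only [Prod.mk.injEq, if_neg hm, mul_zero]
    exact sum_eq_zero fun r _ => if_neg fun hr => hm ⟨hr.1.2, hr.2⟩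

lemma prob_splitAt_eq_mul {ι 𝒳 𝒴 𝒵 : Type*} [Fintype ι] [DecidableEq ι]
    {X : Ω → ι → 𝒳} {Y : Ω → ι → 𝒴} {Z : Ω → ι → 𝒵} (q : (ι → 𝒳) → ι → 𝒴 × 𝒵 → ℝ)
    (hpmf : ∀ xs ys zs, prob μ (fun ω => (X ω, Y ω, Z ω)) (xs, ys, zs) =
      prob μ X xs * ∏ j, q xs j (ys j, zs j))
    (i : ι) (m : (ι → 𝒳) × ({j // j ≠ i} → 𝒴 × 𝒵)) (r : 𝒴 × 𝒵) :
    prob μ (fun ω => ((X ω, fun j : {j // j ≠ i} => (Y ω j, Z ω j)), (Y ω i, Z ω i))) (m, r) =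
      (prob μ X m.1 * ∏ j : {j // j ≠ i}, q m.1 j (m.2 j)) * q m.1 i r := by
  let e : (ι → 𝒳) × (ι → 𝒴) × (ι → 𝒵) ≃ ((ι → 𝒳) × ({j // j ≠ i} → 𝒴 × 𝒵)) × (𝒴 × 𝒵) :=
    ((Equiv.refl _).prodCongr ((Equiv.arrowProdEquivProdArrow ι _ _).symm.trans
      ((Equiv.funSplitAt i _).trans (Equiv.prodComm _ _)))).trans (Equiv.prodAssoc _ _ _).symm
  have hrel := prob_comp_of_injective (μ := μ) e.injective (fun ω => (X ω, Y ω, Z ω))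
    (e.symm (m, r))
  rw [e.apply_symm_apply] at hrel
  refine hrel.trans ?_
  rw [hpmf, Fintype.prod_eq_mul_prod_subtype_ne _ i]
  have hrest : ∀ j : {j // j ≠ i}, (if (j : ι) = i then r else m.2 j) = m.2 j :=
    fun j => if_neg j.2
  simp [e, hrest, mul_comm, mul_left_comm]

lemma condIndepRV_coord_of_memoryless [IsFiniteMeasure μ] {ι 𝒳 𝒜 𝒴 𝒵 ν : Type*} [Fintype ι]
    [DecidableEq ι] [Fintype 𝒳] [Fintype 𝒜] [Fintype 𝒴] [Fintype 𝒵] [Fintype ν]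
    [MeasurableSpace 𝒳] [MeasurableSingletonClass 𝒳] [MeasurableSpace 𝒴]
    [MeasurableSingletonClass 𝒴] [MeasurableSpace 𝒵] [MeasurableSingletonClass 𝒵]
    {X : Ω → ι → 𝒳} {Y : Ω → ι → 𝒴} {Z : Ω → ι → 𝒵}
    (hX : ∀ i, Measurable fun ω => X ω i) (hY : ∀ i, Measurable fun ω => Y ω i)
    (hZ : ∀ i, Measurable fun ω => Z ω i) (act : (ι → 𝒳) → ι → 𝒜) (Q : 𝒳 → 𝒜 → 𝒴 × 𝒵 → ℝ)
    (hchan : ∀ xs ys zs, prob μ (fun ω => (X ω, Y ω, Z ω)) (xs, ys, zs) =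
      prob μ X xs * ∏ j, Q (xs j) (act xs j) (ys j, zs j))
    (i : ι) {V : Ω → ν} {C : Ω → 𝒜 × 𝒳} (v : (ι → 𝒳) × ({j // j ≠ i} → 𝒴 × 𝒵) → ν)
    (hV : ∀ ω, V ω = v (X ω, fun j => (Y ω j, Z ω j))) (hC : ∀ ω, C ω = (act (X ω) i, X ω i)) :
    CondIndepRV μ (fun ω => (Y ω i, Z ω i)) V C := by
  obtain rfl : V = _ := funext hV
  obtain rfl : C = _ := funext hC
  have hmeas :
      Measurable fun ω => ((X ω, fun j : {j // j ≠ i} => (Y ω j, Z ω j)), Y ω i, Z ω i) := by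
    fun_prop
  exact condIndepRV_comp_of_prob_eq_mul (fun t => hmeas (measurableSet_singleton t)) _
    (fun m => (act m.1 i, m.1 i)) (fun c r => Q c.2 c.1 r) (prob_splitAt_eq_mul _ hchan i) v

end

theorem stmt15_general {Ω 𝒳 𝒜 𝒴 𝒵 𝒲 𝒦 : Type*} [MeasurableSpace Ω]
    (μ : Measure Ω) [IsProbabilityMeasure μ]
    [Fintype 𝒳] [Fintype 𝒜] [Fintype 𝒴] [Fintype 𝒵] [Fintype 𝒲] [Fintype 𝒦]
    [MeasurableSpace 𝒳] [MeasurableSingletonClass 𝒳]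
    [MeasurableSpace 𝒴] [MeasurableSingletonClass 𝒴]
    [MeasurableSpace 𝒵] [MeasurableSingletonClass 𝒵]
    (n : ℕ)
    (Xv : Ω → Fin n → 𝒳) (Av : Ω → Fin n → 𝒜) (Yv : Ω → Fin n → 𝒴)
    (Zv : Ω → Fin n → 𝒵) (W : Ω → 𝒲) (K : Ω → 𝒦)
    (hXm : ∀ i, Measurable fun ω => Xv ω i)
    (hYm : ∀ i, Measurable fun ω => Yv ω i) (hZm : ∀ i, Measurable fun ω => Zv ω i)
    (f : (Fin n → 𝒳) → 𝒲 × 𝒦) (hWK : ∀ ω, (W ω, K ω) = f (Xv ω))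
    (fa : 𝒲 → Fin n → 𝒜) (hfa : ∀ ω, Av ω = fa (W ω))
    (Q : 𝒳 → 𝒜 → 𝒴 × 𝒵 → ℝ)
    (hchan : ∀ (xs : Fin n → 𝒳) (ys : Fin n → 𝒴) (zs : Fin n → 𝒵),
      prob μ (fun ω => (Xv ω, Yv ω, Zv ω)) (xs, ys, zs) =
        prob μ Xv xs * ∏ i, Q (xs i) (fa (f xs).1 i) (ys i, zs i)) :
    ∀ i : Fin n,
      CondIndepRV μ (fun ω => (Yv ω i, Zv ω i))
        (fun ω => (W ω, K ω, strOmit Av i ω, strOmit Xv i ω, strSuffix Yv i ω,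
          strPrefix Zv i ω))
        (fun ω => (Av ω i, Xv ω i)) ∧
      CondIndepRV μ
        (fun ω => (W ω, strOmit Av i ω, strSuffix Yv i ω, strPrefix Zv i ω))
        (fun ω => (Av ω i, Xv ω i, Yv ω i, Zv ω i))
        (fun ω => (W ω, K ω, strOmit Av i ω, strSuffix Yv i ω, strPrefix Zv i ω)) ∧
      CondIndepRV μ
        (fun ω => (W ω, K ω, strOmit Av i ω, strSuffix Yv i ω, strPrefix Zv i ω))
        (fun ω => (Yv ω i, Zv ω i))
        (fun ω => (Av ω i, Xv ω i)) := by
  intro i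
  have hA : ∀ ω, Av ω = fa (f (Xv ω)).1 := fun ω => by rw [hfa, ← hWK]
  have hC : ∀ ω, (Av ω i, Xv ω i) = (fa (f (Xv ω)).1 i, Xv ω i) := fun ω => by rw [hA]
  obtain ⟨v, hv⟩ : ∃ v : (Fin n → 𝒳) × ({j // j ≠ i} → 𝒴 × 𝒵) → _, ∀ ω,
      (W ω, K ω, strOmit Av i ω, strOmit Xv i ω, strSuffix Yv i ω, strPrefix Zv i ω) =
        v (Xv ω, fun j => (Yv ω j, Zv ω j)) := by
    refine ⟨fun m => ((f m.1).1, (f m.1).2, fun j => if j = i then none else some (fa (f m.1).1 j),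
      fun j => if j = i then none else some (m.1 j),
      fun j => if h : (i : ℕ) < j then some (m.2 ⟨j, fun hji => by simp [hji] at h⟩).1 else none,
      fun j => if h : (j : ℕ) < i then some (m.2 ⟨j, fun hji => by simp [hji] at h⟩).2 else none),
      fun ω => ?_⟩
    unfold strOmit strSuffix strPrefix
    simp [hA, ← hWK]
  refine ⟨condIndepRV_coord_of_memoryless hXm hYm hZm _ Q hchan i v hv hC,
    condIndepRV_of_eq_comp (fun ⟨w, _, a, y, z⟩ => (w, a, y, z)) fun _ => rfl,
    (condIndepRV_coord_of_memoryless hXm hYm hZm _ Q hchan i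
      (fun m => let (w, k, a, _, y, z) := v m; (w, k, a, y, z)) (fun ω => by rw [← hv]) hC).symm⟩

/-- For an i.i.d. source `X^n`, helper data and key `(W, K) = f(X^n)`, action sequence
`A^n = f_a(W)`, and `(Y_i, Z_i)` generated from `(X^n, A^n)` by a memoryless channel
`Q = P_{YZ|XA}`, for every `i` the pair `(Y_i, Z_i)` is conditionally independent of
`(W, K, A^{n∖i}, X^{n∖i}, Y_{i+1}^n, Z^{i−1})` given `(A_i, X_i)`; in particular, with
`U_i = (W, A^{n∖i}, Y_{i+1}^n, Z^{i−1})` and `V_i = (W, K, A^{n∖i}, Y_{i+1}^n, Z^{i−1})`,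
the Markov chain `U_i − V_i − (A_i, X_i) − (Y_i, Z_i)` holds. -/
theorem stmt15 {Ω 𝒳 𝒜 𝒴 𝒵 𝒲 𝒦 : Type*} [MeasurableSpace Ω]
    (μ : Measure Ω) [IsProbabilityMeasure μ]
    [Fintype 𝒳] [Fintype 𝒜] [Fintype 𝒴] [Fintype 𝒵] [Fintype 𝒲] [Fintype 𝒦]
    [MeasurableSpace 𝒳] [MeasurableSingletonClass 𝒳]
    [MeasurableSpace 𝒜] [MeasurableSingletonClass 𝒜]
    [MeasurableSpace 𝒴] [MeasurableSingletonClass 𝒴]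
    [MeasurableSpace 𝒵] [MeasurableSingletonClass 𝒵]
    [MeasurableSpace 𝒲] [MeasurableSingletonClass 𝒲]
    [MeasurableSpace 𝒦] [MeasurableSingletonClass 𝒦]
    (n : ℕ)
    (Xv : Ω → Fin n → 𝒳) (Av : Ω → Fin n → 𝒜) (Yv : Ω → Fin n → 𝒴)
    (Zv : Ω → Fin n → 𝒵) (W : Ω → 𝒲) (K : Ω → 𝒦)
    (hXm : ∀ i, Measurable fun ω => Xv ω i) (hAm : ∀ i, Measurable fun ω => Av ω i)
    (hYm : ∀ i, Measurable fun ω => Yv ω i) (hZm : ∀ i, Measurable fun ω => Zv ω i)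
    (hWm : Measurable W) (hKm : Measurable K)
    (PX : 𝒳 → ℝ)
    (hiid : ∀ xs : Fin n → 𝒳, prob μ Xv xs = ∏ i, PX (xs i))
    (f : (Fin n → 𝒳) → 𝒲 × 𝒦) (hWK : ∀ ω, (W ω, K ω) = f (Xv ω))
    (fa : 𝒲 → Fin n → 𝒜) (hfa : ∀ ω, Av ω = fa (W ω))
    (Q : 𝒳 → 𝒜 → 𝒴 × 𝒵 → ℝ)
    (hchan : ∀ (xs : Fin n → 𝒳) (ys : Fin n → 𝒴) (zs : Fin n → 𝒵),
      prob μ (fun ω => (Xv ω, Yv ω, Zv ω)) (xs, ys, zs) =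
        prob μ Xv xs * ∏ i, Q (xs i) (fa (f xs).1 i) (ys i, zs i)) :
    ∀ i : Fin n,
      CondIndepRV μ (fun ω => (Yv ω i, Zv ω i))
        (fun ω => (W ω, K ω, strOmit Av i ω, strOmit Xv i ω, strSuffix Yv i ω,
          strPrefix Zv i ω))
        (fun ω => (Av ω i, Xv ω i)) ∧
      CondIndepRV μ
        (fun ω => (W ω, strOmit Av i ω, strSuffix Yv i ω, strPrefix Zv i ω))
        (fun ω => (Av ω i, Xv ω i, Yv ω i, Zv ω i))
        (fun ω => (W ω, K ω, strOmit Av i ω, strSuffix Yv i ω, strPrefix Zv i ω)) ∧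
      CondIndepRV μ
        (fun ω => (W ω, K ω, strOmit Av i ω, strSuffix Yv i ω, strPrefix Zv i ω))
        (fun ω => (Yv ω i, Zv ω i))
        (fun ω => (Av ω i, Xv ω i)) :=
  stmt15_general μ n Xv Av Yv Zv W K hXm hYm hZm f hWK fa hfa Q hchan
end
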